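/- arXiv:2110.01279 — 6 statements merged into one kernel-verified Lean document; each statement's English description precedes it below -/
import Mathlib

section
/- Let A = (Q, Σ, δ, q₀, F) be a minimal partially ordered NFA, i.e., a poNFA with finite state set Q such that no poNFA with strictly fewer states accepts the language L(A). Then for every two distinct states q₁, q₂ ∈ Q, the languages L(_{q₁}A) and L(_{q₂}A) are different, where _qA denotes the NFA (Q, Σ, δ, q, F) obtained from A by taking q as the start state. -/
/-- State `q` is reachable from state `p` in the NFA `M`:
there is a word `w` with `q ∈ δ(p, w)`. -/
def NFA.Reach {α σ : Type*} (M : NFA α σ) (p q : σ) : Prop :=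
  ∃ w : List α, q ∈ M.evalFrom {p} w

/-- An NFA is *partially ordered* (a poNFA) if the reachability relation is
antisymmetric, i.e., a partial order on the states. -/
def NFA.PartiallyOrdered {α σ : Type*} (M : NFA α σ) : Prop :=
  ∀ p q : σ, M.Reach p q → M.Reach q p → p = q

/-!
Suppose two distinct states `q₁ ≠ q₂` of a poNFA accept the same language. Since reachability
is a partial order we may assume that `q₁` is not reachable from `q₂`. Delete `q₁` and redirect
every transition into `q₁` (and the start state, if it is `q₁`) to `q₂`. Every remaining state
still accepts the same language, and a cycle in the new automaton would have to pass through a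
redirected edge and hence yield a path from `q₂` to `q₁` in the old one. So we obtain a smaller
poNFA for the same language, contradicting minimality.
-/

namespace NFA

variable {α σ τ : Type*} {M : NFA α σ}

theorem mem_evalFrom_singleton_cons {p q : σ} {a : α} {w : List α} :
    q ∈ M.evalFrom {p} (a :: w) ↔ ∃ r ∈ M.step p a, q ∈ M.evalFrom {r} w := by
  rw [evalFrom_cons, stepSet_singleton, mem_evalFrom_iff_exists]

theorem mem_acceptsFrom_iff_exists {S : Set σ} {w : List α} :
    w ∈ M.acceptsFrom S ↔ ∃ s ∈ S, w ∈ M.acceptsFrom {s} := by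
  simp only [mem_acceptsFrom, mem_evalFrom_iff_exists (S := S)]
  tauto

theorem cons_mem_acceptsFrom_singleton {p : σ} {a : α} {w : List α} :
    a :: w ∈ M.acceptsFrom {p} ↔ ∃ r ∈ M.step p a, w ∈ M.acceptsFrom {r} := by
  rw [cons_mem_acceptsFrom, stepSet_singleton, mem_acceptsFrom_iff_exists]

namespace Reach

@[refl]
theorem refl (p : σ) : M.Reach p p := ⟨[], rfl⟩

@[trans]
theorem trans {p q r : σ} (hpq : M.Reach p q) (hqr : M.Reach q r) : M.Reach p r := by
  obtain ⟨u, hu⟩ := hpq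
  obtain ⟨v, hv⟩ := hqr
  exact ⟨u ++ v, by rw [evalFrom_append, mem_evalFrom_iff_exists]; exact ⟨q, hu, hv⟩⟩

theorem of_mem_step {p q : σ} {a : α} (h : q ∈ M.step p a) : M.Reach p q :=
  ⟨[a], by rw [mem_evalFrom_singleton_cons]; exact ⟨q, h, rfl⟩⟩

theorem induction_of_step {r : σ → σ → Prop} (hrefl : ∀ p, r p p)
    (htrans : ∀ p q s, r p q → r q s → r p s) (hstep : ∀ p a q, q ∈ M.step p a → r p q)
    {p q : σ} (h : M.Reach p q) : r p q := by
  obtain ⟨w, hw⟩ := h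
  induction w generalizing p with
  | nil => exact (Set.mem_singleton_iff.mp hw) ▸ hrefl p
  | cons a w ih =>
    obtain ⟨t, ht, hq⟩ := mem_evalFrom_singleton_cons.mp hw
    exact htrans p t q (hstep p a t ht) (ih hq)

end Reach

def reindex (e : σ ≃ τ) (M : NFA α σ) : NFA α τ where
  step i a := e '' M.step (e.symm i) a
  start := e '' M.start
  accept := e '' M.accept

theorem evalFrom_reindex (e : σ ≃ τ) (S : Set σ) (w : List α) :
    (M.reindex e).evalFrom (e '' S) w = e '' M.evalFrom S w := by
  induction w generalizing S with
  | nil => rfl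
  | cons a w ih =>
    rw [evalFrom_cons, evalFrom_cons, ← ih]
    simp only [stepSet, reindex, Set.biUnion_image, Equiv.symm_apply_apply, Set.image_iUnion₂]

theorem acceptsFrom_reindex (e : σ ≃ τ) (S : Set σ) :
    (M.reindex e).acceptsFrom (e '' S) = M.acceptsFrom S := by
  ext w
  rw [mem_acceptsFrom, mem_acceptsFrom, evalFrom_reindex]
  simp only [reindex, Set.exists_mem_image, e.injective.mem_set_image]

theorem accepts_reindex (e : σ ≃ τ) : (M.reindex e).accepts = M.accepts :=
  acceptsFrom_reindex e M.start

theorem reach_reindex_iff (e : σ ≃ τ) {p q : σ} :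
    (M.reindex e).Reach (e p) (e q) ↔ M.Reach p q := by
  simp only [Reach, ← Set.image_singleton, evalFrom_reindex, Set.mem_image,
    EmbeddingLike.apply_eq_iff_eq, exists_eq_right]

theorem PartiallyOrdered.reindex (e : σ ≃ τ) (hM : M.PartiallyOrdered) :
    (M.reindex e).PartiallyOrdered := by
  intro i j hij hji
  rw [← e.apply_symm_apply i, ← e.apply_symm_apply j, reach_reindex_iff] at hij hji
  exact e.symm.injective (hM _ _ hij hji)

section Merge

variable [DecidableEq σ] {q₁ q₂ : σ}

def redirect (q₁ q₂ : σ) (h : q₂ ≠ q₁) (s : σ) : {s : σ // s ≠ q₁} :=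
  if hs : s = q₁ then ⟨q₂, h⟩ else ⟨s, hs⟩

theorem redirect_self (h : q₂ ≠ q₁) : redirect q₁ q₂ h q₁ = ⟨q₂, h⟩ := dif_pos rfl

theorem redirect_of_ne (h : q₂ ≠ q₁) {s : σ} (hs : s ≠ q₁) : redirect q₁ q₂ h s = ⟨s, hs⟩ :=
  dif_neg hs

@[simps]
def mergeInto (M : NFA α σ) (q₁ q₂ : σ) (h : q₂ ≠ q₁) : NFA α {s : σ // s ≠ q₁} where
  step v a := redirect q₁ q₂ h '' M.step v a
  start := redirect q₁ q₂ h '' M.start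
  accept := Subtype.val ⁻¹' M.accept

variable {h : q₂ ≠ q₁}

theorem acceptsFrom_redirect (hL : M.acceptsFrom {q₁} = M.acceptsFrom {q₂}) (s : σ) :
    M.acceptsFrom {(redirect q₁ q₂ h s).1} = M.acceptsFrom {s} := by
  by_cases hs : s = q₁
  · rw [hs, redirect_self, hL]
  · rw [redirect_of_ne h hs]

theorem acceptsFrom_mergeInto_singleton (hL : M.acceptsFrom {q₁} = M.acceptsFrom {q₂})
    (v : {s : σ // s ≠ q₁}) : (M.mergeInto q₁ q₂ h).acceptsFrom {v} = M.acceptsFrom {v.1} := by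
  ext w
  induction w generalizing v with
  | nil => simp [mergeInto]
  | cons a w ih =>
    simp only [cons_mem_acceptsFrom_singleton, mergeInto_step, Set.exists_mem_image, ih,
      acceptsFrom_redirect hL]

theorem accepts_mergeInto (hL : M.acceptsFrom {q₁} = M.acceptsFrom {q₂}) :
    (M.mergeInto q₁ q₂ h).accepts = M.accepts := by
  ext w
  rw [accepts_eq_acceptsFrom_start, accepts_eq_acceptsFrom_start, mem_acceptsFrom_iff_exists,
    mem_acceptsFrom_iff_exists]
  simp only [mergeInto_start, Set.exists_mem_image, acceptsFrom_mergeInto_singleton hL,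
    acceptsFrom_redirect hL]

theorem reach_of_reach_mergeInto {u v : {s : σ // s ≠ q₁}}
    (huv : (M.mergeInto q₁ q₂ h).Reach u v) :
    M.Reach u.1 v.1 ∨ (M.Reach u.1 q₁ ∧ M.Reach q₂ v.1) := by
  refine Reach.induction_of_step
    (r := fun u v : {s // s ≠ q₁} => M.Reach u.1 v.1 ∨ (M.Reach u.1 q₁ ∧ M.Reach q₂ v.1))
    (fun u => .inl (.refl u.1)) ?_ ?_ huv
  · rintro u v w (huv | ⟨hu, hv⟩) (hvw | ⟨hv', hw⟩)
    · exact .inl (huv.trans hvw)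
    · exact .inr ⟨huv.trans hv', hw⟩
    · exact .inr ⟨hu, hv.trans hvw⟩
    · exact .inr ⟨hu, hw⟩
  · rintro u a _ ⟨s, hs, rfl⟩
    by_cases hs₁ : s = q₁
    · subst hs₁
      rw [redirect_self]
      exact .inr ⟨.of_mem_step hs, .refl q₂⟩
    · rw [redirect_of_ne h hs₁]
      exact .inl (.of_mem_step hs)

theorem PartiallyOrdered.mergeInto (hM : M.PartiallyOrdered) (hq : ¬ M.Reach q₂ q₁) :
    (M.mergeInto q₁ q₂ h).PartiallyOrdered := by
  intro u v huv hvu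
  rcases reach_of_reach_mergeInto huv with huv | ⟨hu, hv⟩ <;>
    rcases reach_of_reach_mergeInto hvu with hvu | ⟨hv', hu'⟩
  · exact Subtype.ext (hM _ _ huv hvu)
  · exact absurd (hu'.trans (huv.trans hv')) hq
  · exact absurd (hv.trans (hvu.trans hu)) hq
  · exact absurd (hv.trans hv') hq

end Merge

end NFA

/-- If `M` is a minimal poNFA (no poNFA with fewer states accepts `L(M)`), then for
any two distinct states `q₁ ≠ q₂` the languages of `M` started in `q₁`, resp. `q₂`,
differ. -/
theorem stmt_4 {α : Type} {σ : Type} [Fintype σ] (M : NFA α σ) (q₀ : σ)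
    (hstart : M.start = {q₀}) (hpo : M.PartiallyOrdered)
    (hmin : ∀ (k : ℕ) (B : NFA α (Fin k)) (b₀ : Fin k), B.start = {b₀} →
      B.PartiallyOrdered → B.accepts = M.accepts → Fintype.card σ ≤ k) :
    ∀ q₁ q₂ : σ, q₁ ≠ q₂ →
      ({ M with start := {q₁} } : NFA α σ).accepts ≠
        ({ M with start := {q₂} } : NFA α σ).accepts := by
  classical
  intro q₁ q₂ hne hL
  wlog hreach : ¬ M.Reach q₂ q₁ generalizing q₁ q₂
  · exact this q₂ q₁ hne.symm hL.symm fun h₁₂ => hne (hpo _ _ h₁₂ (not_not.mp hreach))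
  let e := Fintype.equivFin {s // s ≠ q₁}
  have hcard := hmin _ ((M.mergeInto q₁ q₂ hne.symm).reindex e)
    (e (NFA.redirect q₁ q₂ hne.symm q₀)) (by simp [NFA.reindex, hstart])
    ((hpo.mergeInto hreach).reindex e)
    (by rw [NFA.accepts_reindex, NFA.accepts_mergeInto (M := M) hL])
  exact (Fintype.card_subtype_lt (p := (· ≠ q₁)) (not_not.mpr rfl)).not_ge hcard
end

section
/- Let n ≥ 1 and let t_i, p_i ∈ ℕ for 1 ≤ i ≤ n. Set X = ⋃_{i=1}^n ( t_i + ℕ·p_i ), where t_i + ℕ·p_i = { t_i + x·p_i : x ∈ ℕ }. If there exists a threshold T ≥ 0 such that every natural number x ≥ T belongs to X, then already every natural number x ≥ T_max belongs to X, where T_max = max{ t_i : 1 ≤ i ≤ n }. -/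
/-- If the union `X = ⋃ i, (t i + ℕ·p i)` of arithmetic progressions contains all
natural numbers from some threshold `T` on, then it already contains all natural
numbers from `T_max = max_i (t i)` on. -/
theorem stmt_5 (n : ℕ) (hn : 1 ≤ n) (t p : Fin n → ℕ) (T : ℕ)
    (hT : ∀ x : ℕ, T ≤ x → ∃ (i : Fin n) (k : ℕ), x = t i + k * p i) :
    ∀ x : ℕ, Finset.univ.sup t ≤ x → ∃ (i : Fin n) (k : ℕ), x = t i + k * p i := by
  intro x hx
  set Q := ∏ i : Fin n, (if p i = 0 then 1 else p i) with hQdef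
  have hQ1 : 1 ≤ Q := Finset.one_le_prod' (fun i _ => by split <;> omega)
  have hTle : T ≤ x + Q * T := le_add_left (Nat.le_mul_of_pos_left T (by omega))
  obtain ⟨i, k, hk⟩ := hT (x + Q * T) hTle
  have hti : t i ≤ x := le_trans (Finset.le_sup (Finset.mem_univ i)) hx
  by_cases hp : p i = 0
  · refine ⟨i, 0, ?_⟩
    simp [hp] at hk ⊢
    omega
  · have hdvd : p i ∣ Q := by
      have := Finset.dvd_prod_of_mem (fun j => if p j = 0 then 1 else p j)
        (Finset.mem_univ i)
      simpa [hp] using this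
    have hd2 : p i ∣ x - t i := by
      have h1 : x - t i = k * p i - Q * T := by omega
      rw [h1]
      exact Nat.dvd_sub (dvd_mul_left _ _) (hdvd.mul_right T)
    obtain ⟨m, hm⟩ := hd2
    exact ⟨i, m, by rw [mul_comm, ← hm]; omega⟩
end

section
/- For every n ≥ 1, every word u over the linearly ordered alphabet Σ_n = {1, 2, …, n} with |u| ≥ 2^n belongs to M''_n; that is, u contains two occurrences of some letter i with only letters strictly smaller than i appearing in between. -/
/-- The language `M''_n` over a linearly ordered alphabet: all words containing two
occurrences of some letter `i` with only letters strictly smaller than `i`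
in between. -/
def Mpp {α : Type*} [LT α] : Set (List α) :=
  { u | ∃ (x y z : List α) (i : α), u = x ++ i :: (y ++ i :: z) ∧ ∀ c ∈ y, c < i }

lemma mpp_append {α : Type*} [LT α] {v : List α} (hv : v ∈ Mpp) (x z : List α) :
    x ++ v ++ z ∈ Mpp := by
  obtain ⟨a, y, b, i, rfl, hy⟩ := hv
  exact ⟨x ++ a, y, b ++ z, i, by simp, hy⟩

lemma split_first {α : Type*} (p : α → Prop) [DecidablePred p] :
    ∀ u : List α, (∀ c ∈ u, ¬ p c) ∨
      ∃ a h b, u = a ++ h :: b ∧ p h ∧ ∀ c ∈ a, ¬ p c := by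
  intro u
  induction u with
  | nil => left; simp
  | cons x xs ih =>
    by_cases hx : p x
    · exact Or.inr ⟨[], x, xs, rfl, hx, by simp⟩
    · rcases ih with h | ⟨a, h, b, rfl, hh, ha⟩
      · left
        intro c hc
        rcases List.mem_cons.mp hc with rfl | hc
        · exact hx
        · exact h c hc
      · refine Or.inr ⟨x :: a, h, b, rfl, hh, ?_⟩
        intro c hc
        rcases List.mem_cons.mp hc with rfl | hc
        · exact hx
        · exact ha c hc

lemma key (n : ℕ) : ∀ (m : ℕ) (u : List (Fin n)),
    (∀ c ∈ u, (c : ℕ) < m) → 2 ^ m ≤ u.length → u ∈ Mpp := by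
  intro m
  induction m with
  | zero =>
    intro u hall hlen
    cases u with
    | nil => simp at hlen
    | cons x xs => exact absurd (hall x (by simp)) (by omega)
  | succ m ih =>
    intro u hall hlen
    rcases split_first (fun c : Fin n => (c : ℕ) = m) u with h | ⟨a, d, b, rfl, hd, ha⟩
    · exact ih u (fun c hc => by have := hall c hc; have := h c hc; omega)
        (le_trans (Nat.pow_le_pow_right (by norm_num) (Nat.le_succ m)) hlen)
    · rcases split_first (fun c : Fin n => (c : ℕ) = m) b with h | ⟨y, e, z, rfl, he, hy⟩
      · -- at most one occurrence of m; split
        simp only [List.length_append, List.length_cons] at hlen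
        have : 2 ^ m ≤ a.length ∨ 2 ^ m ≤ b.length := by
          have : 2 ^ (m + 1) = 2 ^ m + 2 ^ m := by ring
          omega
        rcases this with hla | hlb
        · have hamem : a ∈ Mpp := ih a
            (fun c hc => by
              have := hall c (by simp [hc]); have := ha c hc; omega) hla
          have := mpp_append hamem [] (d :: b)
          simpa using this
        · have hbmem : b ∈ Mpp := ih b
            (fun c hc => by
              have := hall c (by simp [hc]); have := h c hc; omega) hlb
          have := mpp_append hbmem (a ++ [d]) []
          simpa using this
      · have hde : d = e := Fin.ext (by omega)
        subst hde
        refine ⟨a, y, z, d, rfl, ?_⟩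
        intro c hc
        have h1 := hall c (by simp [hc])
        have h2 := hy c hc
        exact show (c : ℕ) < (d : ℕ) by omega

/-- Every word of length at least `2^n` over the `n`-letter ordered alphabet
belongs to `M''_n`. -/
theorem stmt_6 (n : ℕ) (hn : 1 ≤ n) (u : List (Fin n)) (hu : 2 ^ n ≤ u.length) :
    u ∈ Mpp := by
  exact key n n u (fun c _ => c.isLt) hu
end

section
/- Let n ≥ 1 and let u_n be the n-th Zimin word over Σ_n = {1, 2, …, n}. Then u_n contains exactly 2^{n−1} occurrences of the letter 1, and for every occurrence of the letter 1 in u_n, the word obtained from u_n by deleting that single occurrence does not belong to M''_n (and, having even length 2^n − 2, does not belong to M_n = M'_n ∪ M''_n either). -/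
/-- The Zimin words over the alphabet `{1, 2, …}` (as natural numbers):
`u₁ = 1` and `u_{j} = u_{j-1} · j · u_{j-1}`. -/
def zimin : ℕ → List ℕ
  | 0 => []
  | j + 1 => zimin j ++ (j + 1) :: zimin j

lemma zimin_length (n : ℕ) : (zimin n).length = 2 ^ n - 1 := by
  induction n with
  | zero => simp [zimin]
  | succ n ih =>
    have h1 : 1 ≤ 2 ^ n := Nat.one_le_two_pow
    simp only [zimin, List.length_append, List.length_cons, ih, pow_succ]
    omega

lemma zimin_mem_le {n c : ℕ} (h : c ∈ zimin n) : c ≤ n := by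
  induction n with
  | zero => simp [zimin] at h
  | succ n ih =>
    simp only [zimin, List.mem_append, List.mem_cons] at h
    rcases h with h | h | h
    · exact le_trans (ih h) (Nat.le_succ n)
    · omega
    · exact le_trans (ih h) (Nat.le_succ n)

lemma not_mem_zimin (n : ℕ) : (n + 1) ∉ zimin n := fun h => by
  have := zimin_mem_le h; omega

lemma two_pow_eq (n : ℕ) (hn : 1 ≤ n) : 2 ^ n = 2 * 2 ^ (n - 1) := by
  rw [← pow_succ']
  congr 1
  omega

lemma split1 {l₁ l₂ x y : List ℕ} {m i : ℕ} (h : l₁ ++ m :: l₂ = x ++ i :: y)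
    (hmi : m ≠ i) :
    (∃ t, x = l₁ ++ m :: t ∧ l₂ = t ++ i :: y) ∨
    (∃ t, l₁ = x ++ i :: t ∧ y = t ++ m :: l₂) := by
  rcases List.append_eq_append_iff.1 h with ⟨a', ha, hb⟩ | ⟨c', hc, hd⟩
  · cases a' with
    | nil => simp at hb; exact absurd hb.1 hmi
    | cons d a'' =>
      simp only [List.cons_append, List.cons.injEq] at hb
      exact Or.inl ⟨a'', by rw [ha, hb.1], hb.2⟩
  · cases c' with
    | nil => simp at hd; exact absurd hd.1.symm hmi
    | cons d c'' =>
      simp only [List.cons_append, List.cons.injEq] at hd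
      exact Or.inr ⟨c'', by rw [hc, hd.1], hd.2⟩

lemma split2 {l₁ l₂ a b c : List ℕ} {m i : ℕ}
    (h : l₁ ++ m :: l₂ = a ++ i :: (b ++ i :: c)) (hmb : m ∉ b) (hmi : m ≠ i) :
    (∃ t, a = l₁ ++ m :: t ∧ l₂ = t ++ i :: (b ++ i :: c)) ∨
    (∃ t, l₁ = a ++ i :: (b ++ i :: t) ∧ c = t ++ m :: l₂) := by
  rcases split1 h hmi with ⟨t, h1, h2⟩ | ⟨t, h1, h2⟩
  · exact Or.inl ⟨t, h1, h2⟩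
  · rcases split1 h2.symm hmi with ⟨s, h3, h4⟩ | ⟨s, h3, h4⟩
    · exact absurd (by rw [h3]; simp : m ∈ b) hmb
    · exact Or.inr ⟨s, by rw [h1, h3], h4⟩

lemma mpp_count_ge {w a b c : List ℕ} {i : ℕ}
    (hw : w = a ++ i :: (b ++ i :: c)) : 2 ≤ w.count i := by
  subst hw
  simp only [List.count_append, List.count_cons_self]
  omega

lemma mpp_mem {w a b c : List ℕ} {i : ℕ}
    (hw : w = a ++ i :: (b ++ i :: c)) : i ∈ w := by
  subst hw; simp

lemma zimin_not_mpp : ∀ n, zimin n ∉ (Mpp : Set (List ℕ)) := by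
  intro n
  induction n with
  | zero =>
    rintro ⟨x, y, z, i, heq, -⟩
    simp [zimin] at heq
  | succ n ih =>
    rintro ⟨x, y, z, i, heq, hlt⟩
    rw [zimin] at heq
    have hcnt : (zimin n ++ (n + 1) :: zimin n).count (n + 1) = 1 := by
      simp [List.count_append, List.count_cons,
        List.count_eq_zero_of_not_mem (not_mem_zimin n)]
    have hne : i ≠ n + 1 := by
      intro hi
      have := mpp_count_ge heq
      rw [hi, hcnt] at this
      omega
    have hile : i ≤ n + 1 := by
      have h2 : i ∈ zimin n ++ (n + 1) :: zimin n := mpp_mem heq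
      rw [← zimin] at h2
      exact zimin_mem_le h2
    have hnb : (n + 1) ∉ y := by
      intro hmem
      have := hlt _ hmem
      omega
    rcases split2 heq hnb (fun h => hne h.symm) with ⟨t, -, h2⟩ | ⟨t, h1, -⟩
    · exact ih ⟨t, y, z, i, h2, hlt⟩
    · exact ih ⟨x, y, t, i, h1, hlt⟩

lemma del_not_mpp : ∀ n x y, zimin n = x ++ 1 :: y → (x ++ y) ∉ (Mpp : Set (List ℕ)) := by
  intro n
  induction n with
  | zero => intro x y h; simp [zimin] at h
  | succ n ih =>
    intro x y heq
    -- all letters of x ++ y are ≤ n + 1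
    have hall : ∀ d ∈ x ++ y, d ≤ n + 1 := by
      intro d hd
      have hdm : d ∈ zimin (n + 1) := by
        rw [heq]
        simp only [List.mem_append, List.mem_cons] at hd ⊢
        tauto
      exact zimin_mem_le hdm
    rcases Nat.eq_zero_or_pos n with rfl | hn
    · have h1 : zimin 1 = [1] := by simp [zimin]
      rw [h1] at heq
      have hl := congrArg List.length heq
      simp only [List.length_cons, List.length_nil, List.length_append] at hl
      have hx : x = [] := List.eq_nil_of_length_eq_zero (by omega)
      have hy : y = [] := List.eq_nil_of_length_eq_zero (by omega)
      subst hx; subst hy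
      rintro ⟨a, b, c, i, hw, -⟩
      simp at hw
    · rw [zimin] at heq
      have hm1 : (n + 1 : ℕ) ≠ 1 := by omega
      rcases split1 heq hm1 with ⟨t, h1, h2⟩ | ⟨t, h1, h2⟩
      · -- x = zimin n ++ (n+1) :: t, zimin n = t ++ 1 :: y
        have hw : x ++ y = zimin n ++ (n + 1) :: (t ++ y) := by
          rw [h1]; simp
        rintro ⟨a, b, c, i, hmw, hlt⟩
        have hnt : (n + 1) ∉ t := fun h => not_mem_zimin n (by rw [h2]; simp [h])
        have hny : (n + 1) ∉ y := fun h => not_mem_zimin n (by rw [h2]; simp [h])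
        have hcnt : (x ++ y).count (n + 1) = 1 := by
          rw [hw]
          simp [List.count_append, List.count_cons,
            List.count_eq_zero_of_not_mem (not_mem_zimin n),
            List.count_eq_zero_of_not_mem hnt,
            List.count_eq_zero_of_not_mem hny]
        have hne : i ≠ n + 1 := by
          intro hi
          have := mpp_count_ge hmw
          rw [hi, hcnt] at this
          omega
        have hile : i ≤ n + 1 := hall _ (mpp_mem hmw)
        have hnb : (n + 1) ∉ b := by
          intro hmem
          have := hlt _ hmem
          omega
        have hmw' : zimin n ++ (n + 1) :: (t ++ y) = a ++ i :: (b ++ i :: c) := by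
          rw [← hw, hmw]
        rcases split2 hmw' hnb (fun h => hne h.symm) with ⟨s, -, hs2⟩ | ⟨s, hs1, -⟩
        · exact ih t y h2 ⟨s, b, c, i, hs2, hlt⟩
        · exact zimin_not_mpp n ⟨a, b, s, i, hs1, hlt⟩
      · -- zimin n = x ++ 1 :: t, y = t ++ (n+1) :: zimin n
        have hw : x ++ y = (x ++ t) ++ (n + 1) :: zimin n := by
          rw [h2]; simp
        rintro ⟨a, b, c, i, hmw, hlt⟩
        have hnx : (n + 1) ∉ x := fun h => not_mem_zimin n (by rw [h1]; simp [h])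
        have hnt : (n + 1) ∉ t := fun h => not_mem_zimin n (by rw [h1]; simp [h])
        have hcnt : (x ++ y).count (n + 1) = 1 := by
          rw [hw]
          simp [List.count_append, List.count_cons,
            List.count_eq_zero_of_not_mem (not_mem_zimin n),
            List.count_eq_zero_of_not_mem hnx,
            List.count_eq_zero_of_not_mem hnt]
        have hne : i ≠ n + 1 := by
          intro hi
          have := mpp_count_ge hmw
          rw [hi, hcnt] at this
          omega
        have hile : i ≤ n + 1 := hall _ (mpp_mem hmw)
        have hnb : (n + 1) ∉ b := by
          intro hmem
          have := hlt _ hmem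
          omega
        have hmw' : (x ++ t) ++ (n + 1) :: zimin n = a ++ i :: (b ++ i :: c) := by
          rw [← hw, hmw]
        rcases split2 hmw' hnb (fun h => hne h.symm) with ⟨s, -, hs2⟩ | ⟨s, hs1, -⟩
        · exact zimin_not_mpp n ⟨s, b, c, i, hs2, hlt⟩
        · exact ih x t h1 ⟨a, b, s, i, hs1, hlt⟩

lemma zimin_count_one : ∀ n, 1 ≤ n → (zimin n).count 1 = 2 ^ (n - 1) := by
  intro n
  induction n with
  | zero => omega
  | succ n ih =>
    intro _
    rcases Nat.eq_zero_or_pos n with rfl | hn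
    · simp [zimin]
    · have ihn := ih hn
      have hpow := two_pow_eq n hn
      rw [zimin, Nat.succ_sub_one]
      simp only [List.count_append, List.count_cons, ihn]
      have hb : ((n + 1 : ℕ) == 1) = false := by
        simp only [beq_eq_false_iff_ne, ne_eq]
        omega
      rw [hb, if_neg (by simp)]
      omega

/-- The `n`-th Zimin word `u_n` contains exactly `2^(n-1)` occurrences of the
letter `1`, and deleting any single occurrence of `1` from `u_n` yields a word that
is not in `M''_n` and has even length `2^n - 2` (hence is not in `M_n` either). -/
theorem stmt_12 (n : ℕ) (hn : 1 ≤ n) :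
    (zimin n).count 1 = 2 ^ (n - 1) ∧
      ∀ x y : List ℕ, zimin n = x ++ 1 :: y →
        (x ++ y) ∉ (Mpp : Set (List ℕ)) ∧ (x ++ y).length = 2 ^ n - 2 ∧
          ¬ Odd (x ++ y).length := by
  have h2 : 2 ≤ 2 ^ n := by
    calc 2 = 2 ^ 1 := (pow_one 2).symm
    _ ≤ 2 ^ n := Nat.pow_le_pow_right (by norm_num) hn
  refine ⟨zimin_count_one n hn, fun x y heq => ⟨del_not_mpp n x y heq, ?_, ?_⟩⟩
  · have hlen := zimin_length n
    rw [heq] at hlen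
    simp only [List.length_append, List.length_cons] at hlen ⊢
    omega
  · rw [Nat.not_odd_iff_even]
    have hlen := zimin_length n
    rw [heq] at hlen
    have hpow := two_pow_eq n hn
    simp only [List.length_append, List.length_cons] at hlen
    refine ⟨2 ^ (n - 1) - 1, ?_⟩
    simp only [List.length_append]
    omega
end

section
/- Let Σ be a finite alphabet, v ∈ Σ* a word, and Γ ⊆ Σ. Then a word w ∈ Σ* belongs to the shuffle v ⧢ Γ* if and only if v is a subsequence of w and, for every letter a ∈ Σ \ Γ, the number of occurrences of a in w equals the number of occurrences of a in v. Consequently, v ⧢ Γ* = (v ⧢ Σ*) ∩ complement( ⋃_{a ∈ Σ\Γ} (comm(va) ⧢ Σ*) ). -/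
/-!
Shuffling `v` with `u` keeps `v` as a subsequence and adds the letter counts of `u`; conversely,
every word `w` containing `v` as a subsequence is a shuffle of `v` with the complementary
subsequence, whose letters all lie in `Γ` exactly when `w` has no more occurrences than `v` of
any letter outside `Γ`. For the second identity, `comm(va) ⧢ Σ*` is the set of words containing
`va` up to permutation, which among the words containing `v` are those with more `a`'s than `v`.
-/

/-- `IsShuffle u v w` holds iff `w` is an interleaving (shuffle) of `u` and `v`,
i.e., `w = u₀v₀u₁v₁⋯u_kv_k` for factorizations `u = u₀u₁⋯u_k`, `v = v₀v₁⋯v_k`. -/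
inductive IsShuffle {α : Type*} : List α → List α → List α → Prop
  | nil : IsShuffle [] [] []
  | left (a : α) {u v w : List α} : IsShuffle u v w → IsShuffle (a :: u) v (a :: w)
  | right (a : α) {u v w : List α} : IsShuffle u v w → IsShuffle u (a :: v) (a :: w)

/-- The shuffle `v ⧢ K` of a word `v` with a language `K`. -/
def shuffleWithLang {α : Type*} (v : List α) (K : Set (List α)) : Set (List α) :=
  { w | ∃ u ∈ K, IsShuffle v u w }

/-- The shuffle `K₁ ⧢ K₂` of two languages. -/
def langShuffle {α : Type*} (K₁ K₂ : Set (List α)) : Set (List α) :=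
  { w | ∃ u ∈ K₁, ∃ x ∈ K₂, IsShuffle u x w }

/-- `comm u` is the set of words having the same number of occurrences of every
letter as `u`. -/
def commClass {α : Type*} [DecidableEq α] (u : List α) : Set (List α) :=
  { w | ∀ a : α, w.count a = u.count a }

section

variable {α : Type*}

theorem IsShuffle.sublist_left {u v w : List α} (h : IsShuffle u v w) : u.Sublist w := by
  induction h with
  | nil => exact .slnil
  | left a _ ih => exact ih.cons_cons a
  | right a _ ih => exact ih.cons a

theorem IsShuffle.count_eq [DecidableEq α] {u v w : List α} (h : IsShuffle u v w) (a : α) :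
    w.count a = u.count a + v.count a := by
  induction h with
  | nil => rfl
  | left b _ ih => simp only [List.count_cons, ih]; ring
  | right b _ ih => simp only [List.count_cons, ih]; ring

theorem List.Sublist.exists_isShuffle {u w : List α} (h : u.Sublist w) :
    ∃ v, IsShuffle u v w := by
  induction h with
  | slnil => exact ⟨[], .nil⟩
  | cons a _ ih =>
    obtain ⟨v, hv⟩ := ih
    exact ⟨a :: v, .right a hv⟩
  | cons_cons a _ ih =>
    obtain ⟨v, hv⟩ := ih
    exact ⟨v, .left a hv⟩

theorem mem_shuffleWithLang_univ {v w : List α} :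
    w ∈ shuffleWithLang v Set.univ ↔ v.Sublist w := by
  refine ⟨fun ⟨_, _, hs⟩ => hs.sublist_left, fun h => ?_⟩
  obtain ⟨u, hs⟩ := h.exists_isShuffle
  exact ⟨u, trivial, hs⟩

theorem mem_shuffleWithLang_setOf_forall_mem_iff [DecidableEq α] {v w : List α} {Γ : Set α} :
    w ∈ shuffleWithLang v { u | ∀ c ∈ u, c ∈ Γ } ↔
      v.Sublist w ∧ ∀ a ∉ Γ, w.count a = v.count a := by
  constructor
  · rintro ⟨u, hu, hs⟩
    refine ⟨hs.sublist_left, fun a ha => ?_⟩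
    have hu_count : u.count a = 0 := List.count_eq_zero.mpr fun hmem => ha (hu a hmem)
    rw [hs.count_eq, hu_count, add_zero]
  · rintro ⟨hsub, hcount⟩
    obtain ⟨u, hs⟩ := hsub.exists_isShuffle
    refine ⟨u, fun c hc => ?_, hs⟩
    by_contra hcΓ
    have hpos : 0 < u.count c := List.count_pos_iff.mpr hc
    have := hs.count_eq c
    have := hcount c hcΓ
    omega

theorem mem_langShuffle_commClass_univ [DecidableEq α] {u w : List α} :
    w ∈ langShuffle (commClass u) Set.univ ↔ u.Subperm w := by
  constructor
  · rintro ⟨u', hu', _, _, hs⟩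
    exact (List.perm_iff_count.mpr hu').symm.subperm.trans hs.sublist_left.subperm
  · rintro ⟨u', hperm, hsub⟩
    obtain ⟨x, hs⟩ := hsub.exists_isShuffle
    exact ⟨u', List.perm_iff_count.mp hperm, x, trivial, hs⟩

theorem List.Sublist.append_singleton_subperm_iff [DecidableEq α] {v w : List α}
    (h : v.Sublist w) (a : α) : (v ++ [a]).Subperm w ↔ v.count a < w.count a := by
  rw [(List.perm_append_singleton a v).subperm_right]
  refine ⟨fun hsp => ?_, h.subperm.cons_left a⟩
  simpa using hsp.count_le a

end

theorem stmt_13_general {α : Type*} [DecidableEq α] (v : List α) (Γ : Set α) :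
    (∀ w : List α,
        w ∈ shuffleWithLang v { u | ∀ c ∈ u, c ∈ Γ } ↔
          (v.Sublist w ∧ ∀ a : α, a ∉ Γ → w.count a = v.count a)) ∧
      shuffleWithLang v { u | ∀ c ∈ u, c ∈ Γ } =
        shuffleWithLang v Set.univ ∩
          (⋃ a ∈ { a : α | a ∉ Γ }, langShuffle (commClass (v ++ [a])) Set.univ)ᶜ := by
  refine ⟨fun w => mem_shuffleWithLang_setOf_forall_mem_iff, Set.ext fun w => ?_⟩
  simp only [mem_shuffleWithLang_setOf_forall_mem_iff, Set.mem_inter_iff, Set.mem_compl_iff,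
    Set.mem_iUnion, Set.mem_ofPred_eq, mem_shuffleWithLang_univ, mem_langShuffle_commClass_univ,
    not_exists]
  refine and_congr_right fun hsub => forall₂_congr fun a _ => ?_
  rw [hsub.append_singleton_subperm_iff, not_lt]
  exact ⟨le_of_eq, (hsub.count_le a).antisymm'⟩

/-- A word `w` belongs to `v ⧢ Γ*` iff `v` is a subsequence of `w` and, for every
letter `a ∈ Σ \ Γ`, the number of occurrences of `a` in `w` equals that in `v`.
Consequently, `v ⧢ Γ* = (v ⧢ Σ*) ∩ (⋃_{a ∈ Σ\Γ} comm(va) ⧢ Σ*)ᶜ`. -/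
theorem stmt_13 {α : Type*} [Fintype α] [DecidableEq α] (v : List α) (Γ : Set α) :
    (∀ w : List α,
        w ∈ shuffleWithLang v { u | ∀ c ∈ u, c ∈ Γ } ↔
          (v.Sublist w ∧ ∀ a : α, a ∉ Γ → w.count a = v.count a)) ∧
      shuffleWithLang v { u | ∀ c ∈ u, c ∈ Γ } =
        shuffleWithLang v Set.univ ∩
          (⋃ a ∈ { a : α | a ∉ Γ }, langShuffle (commClass (v ++ [a])) Set.univ)ᶜ :=
  stmt_13_general v Γ
end

section
/- Let Σ = {0, 1}, let n ≥ 1, and let 0 ≤ i ≤ n − 1. Then the following language identity holds: Σ^i · {1} · Σ^{n−i−1} ∪ Σ^{≥ n+1} = Σ^i · Σ* · {1} · Σ^{n−i−1} · Σ* ∪ Σ^{n+1} · Σ*, where Σ^j denotes the set of words of length exactly j over Σ and Σ^{≥ n+1} the set of words of length at least n + 1. In particular, the language on the left-hand side is a finite union of shuffle ideals. -/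
/-- A language `L` over the alphabet `α` is a *shuffle ideal* if whenever `w ∈ L`
and `w` is a subsequence of `u`, then `u ∈ L`. -/
def ShuffleIdeal {α : Type*} (L : Set (List α)) : Prop :=
  ∀ w u : List α, w ∈ L → w.Sublist u → u ∈ L

/-!
Both sides consist of the words of length at least `n + 1` together with some words carrying
the letter `1` with at least `i` letters before it and at least `n - i - 1` after it. On the
left the margins are exact; on the right they may be longer, but a word with a longer margin
already has length at least `n + 1`. The right-hand side is visibly a union of two shuffle
ideals: inserting letters only lengthens a word and its margins around a fixed occurrence.
-/

namespace List

variable {α : Type*}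

theorem exists_sublist_sublist_of_append_cons_sublist {l₁ l₂ s : List α} {a : α}
    (h : (l₁ ++ a :: l₂).Sublist s) :
    ∃ s₁ s₂, l₁.Sublist s₁ ∧ l₂.Sublist s₂ ∧ s = s₁ ++ a :: s₂ := by
  obtain ⟨r₁, r₂, rfl, h₁, h₂⟩ := append_sublist_iff.mp h
  obtain ⟨t₁, t₂, rfl, ha, h₃⟩ := cons_sublist_iff.mp h₂
  obtain ⟨p, q, rfl⟩ := append_of_mem ha
  exact ⟨r₁ ++ p, q ++ t₂, h₁.trans (sublist_append_left _ _),
    h₃.trans (sublist_append_right _ _), by simp⟩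

end List

section Languages

variable {α : Type*}

def letterWithMargins (i k : ℕ) (a : α) : Set (List α) :=
  { w | ∃ x u y v : List α, x.length = i ∧ y.length = k ∧ w = x ++ u ++ a :: (y ++ v) }

theorem mem_letterWithMargins_iff {i k : ℕ} {a : α} {w : List α} :
    w ∈ letterWithMargins i k a ↔
      ∃ p q : List α, i ≤ p.length ∧ k ≤ q.length ∧ w = p ++ a :: q := by
  constructor
  · rintro ⟨x, u, y, v, rfl, rfl, rfl⟩
    exact ⟨x ++ u, y ++ v, by simp, by simp, by simp⟩
  · rintro ⟨p, q, hp, hq, rfl⟩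
    exact ⟨p.take i, p.drop i, q.take k, q.drop k, by simp [hp], by simp [hq], by simp⟩

theorem shuffleIdeal_letterWithMargins (i k : ℕ) (a : α) :
    ShuffleIdeal (letterWithMargins i k a) := by
  intro w s hw hws
  obtain ⟨p, q, hp, hq, rfl⟩ := mem_letterWithMargins_iff.mp hw
  obtain ⟨s₁, s₂, h₁, h₂, rfl⟩ := List.exists_sublist_sublist_of_append_cons_sublist hws
  exact mem_letterWithMargins_iff.mpr ⟨s₁, s₂, hp.trans h₁.length_le, hq.trans h₂.length_le, rfl⟩

theorem shuffleIdeal_setOf_le_length (m : ℕ) : ShuffleIdeal { w : List α | m ≤ w.length } :=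
  fun _ _ hw hwu => le_trans hw hwu.length_le

theorem setOf_exists_length_eq_append (m : ℕ) :
    { w : List α | ∃ x v : List α, x.length = m ∧ w = x ++ v } = { w | m ≤ w.length } := by
  ext w
  constructor
  · rintro ⟨x, v, rfl, rfl⟩
    simp
  · intro hw
    exact ⟨w.take m, w.drop m, by simpa using hw, by simp⟩

theorem exact_margins_union_long_eq {i k m : ℕ} (a : α) (hm : m ≤ i + k + 2) :
    { w : List α | ∃ x y : List α, x.length = i ∧ y.length = k ∧ w = x ++ a :: y } ∪
        { w | m ≤ w.length } =
      letterWithMargins i k a ∪ { w | m ≤ w.length } := by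
  ext w
  constructor
  · rintro (⟨x, y, hx, hy, rfl⟩ | hw)
    · exact Or.inl ⟨x, [], y, [], hx, hy, by simp⟩
    · exact Or.inr hw
  · rintro (⟨x, u, y, v, rfl, rfl, rfl⟩ | hw)
    · by_cases huv : u = [] ∧ v = []
      · obtain ⟨rfl, rfl⟩ := huv
        exact Or.inl ⟨x, y, rfl, rfl, by simp⟩
      · right
        have : u.length + v.length ≠ 0 := by simpa [List.length_eq_zero_iff] using huv
        simp only [Set.mem_ofPred_eq, List.length_append, List.length_cons]
        omega
    · exact Or.inr hw

end Languages

theorem stmt_14_general (n i : ℕ) :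
    ({ w : List Bool | ∃ x y : List Bool,
          x.length = i ∧ y.length = n - i - 1 ∧ w = x ++ true :: y } ∪
        { w : List Bool | n + 1 ≤ w.length } =
      { w : List Bool | ∃ x u y v : List Bool,
          x.length = i ∧ y.length = n - i - 1 ∧ w = x ++ u ++ true :: (y ++ v) } ∪
        { w : List Bool | ∃ x v : List Bool, x.length = n + 1 ∧ w = x ++ v }) ∧
    ∃ S : Set (Set (List Bool)), S.Finite ∧ (∀ K ∈ S, ShuffleIdeal K) ∧
      ({ w : List Bool | ∃ x y : List Bool,
          x.length = i ∧ y.length = n - i - 1 ∧ w = x ++ true :: y } ∪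
        { w : List Bool | n + 1 ≤ w.length }) = ⋃₀ S := by
  have key := exact_margins_union_long_eq (i := i) (k := n - i - 1) (m := n + 1) true (by omega)
  refine ⟨by rw [setOf_exists_length_eq_append, key]; rfl,
    {letterWithMargins i (n - i - 1) true, { w | n + 1 ≤ w.length }},
    (Set.finite_singleton _).insert _, ?_, by rw [key, Set.sUnion_pair]⟩
  rintro K (rfl | rfl)
  · exact shuffleIdeal_letterWithMargins _ _ _
  · exact shuffleIdeal_setOf_le_length _

/-- Over the binary alphabet (`Bool`, with `true` playing the role of the
letter `1`), for `0 ≤ i ≤ n-1`: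
`Σ^i · 1 · Σ^{n-i-1} ∪ Σ^{≥ n+1} = Σ^i · Σ* · 1 · Σ^{n-i-1} · Σ* ∪ Σ^{n+1} · Σ*`,
and in particular the left-hand side is a finite union of shuffle ideals. -/
theorem stmt_14 (n i : ℕ) (hn : 1 ≤ n) (hi : i ≤ n - 1) :
    ({ w : List Bool | ∃ x y : List Bool,
          x.length = i ∧ y.length = n - i - 1 ∧ w = x ++ true :: y } ∪
        { w : List Bool | n + 1 ≤ w.length } =
      { w : List Bool | ∃ x u y v : List Bool,
          x.length = i ∧ y.length = n - i - 1 ∧ w = x ++ u ++ true :: (y ++ v) } ∪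
        { w : List Bool | ∃ x v : List Bool, x.length = n + 1 ∧ w = x ++ v }) ∧
    ∃ S : Set (Set (List Bool)), S.Finite ∧ (∀ K ∈ S, ShuffleIdeal K) ∧
      ({ w : List Bool | ∃ x y : List Bool,
          x.length = i ∧ y.length = n - i - 1 ∧ w = x ++ true :: y } ∪
        { w : List Bool | n + 1 ≤ w.length }) = ⋃₀ S :=
  stmt_14_general n i
end
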